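/- arXiv:2601.09308 — 2 statements merged into one kernel-verified Lean document; each statement's English description precedes it below -/
import Mathlib

section
/- Let μ be a finite measure on a measurable space and let (μ_n) be a sequence of finite measures on the same space such that D(μ‖μ_n) → 0 as n → ∞. Then μ_n converges to μ setwise: for every measurable set A, μ_n(A) → μ(A). -/
open MeasureTheory Filter Topology ENNReal

open Classical in
/-- Information divergence `D(μ‖ν)`: if `μ ≪ ν` it is `∫ (ρ ln ρ − ρ + 1) dν` where
`ρ` is the density of `μ` with respect to `ν`, and `∞` otherwise. -/
noncomputable def infoDiv {Ω : Type*} [MeasurableSpace Ω] (μ ν : Measure Ω) : ℝ≥0∞ :=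
  if μ ≪ ν then
    ∫⁻ x, ENNReal.ofReal ((μ.rnDeriv ν x).toReal * Real.log (μ.rnDeriv ν x).toReal
      - (μ.rnDeriv ν x).toReal + 1) ∂ν
  else ∞

/-! The convex conjugate of `klFun x = x log x + 1 - x` is `s ↦ exp s - 1`, so Young's inequality
reads `s x ≤ klFun x + (exp s - 1)`; with `exp s ≤ 1 + s + s²` for `|s| ≤ 1` this gives
`δ |x - 1| ≤ klFun x + δ²` for `0 ≤ δ ≤ 1`. Integrating it against `ν` over `A`, with `x` the
density of `μ`, yields `δ |ν A - μ A| ≤ D(μ‖ν) + δ² ν A`. Once `D(μ‖μₙ) ≤ δ²` this says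
`|μₙ A - μ A| ≤ δ (1 + μₙ A)`, which for `δ ≤ 1/2` first bounds `μₙ A` by `2 μ A + 1` and then
gives `|μₙ A - μ A| ≤ 2 δ (μ A + 1)`. -/

open InformationTheory Real

lemma infoDiv_eq_klDiv {Ω : Type*} [MeasurableSpace Ω] (μ ν : Measure Ω)
    [IsFiniteMeasure μ] [IsFiniteMeasure ν] : infoDiv μ ν = klDiv μ ν := by
  simp only [infoDiv, klDiv_eq_lintegral_klFun, klFun_apply, sub_add_eq_add_sub]

lemma mul_le_klFun_add_exp_sub_one {x : ℝ} (hx : 0 ≤ x) (s : ℝ) :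
    s * x ≤ klFun x + (exp s - 1) := by
  rcases hx.eq_or_lt with rfl | hx
  · simp [klFun_zero, (exp_pos s).le]
  have hyoung := add_one_le_exp (s - log x)
  rw [exp_sub, exp_log hx, le_div_iff₀ hx] at hyoung
  rw [klFun_apply]; nlinarith

lemma mul_sub_one_le_klFun_add_sq {x s : ℝ} (hx : 0 ≤ x) (hs : |s| ≤ 1) :
    s * (x - 1) ≤ klFun x + s ^ 2 := by
  have := mul_le_klFun_add_exp_sub_one hx s
  have := (abs_le.1 (abs_exp_sub_one_sub_id_le hs)).2
  linarith

lemma mul_abs_sub_one_le_klFun_add_sq {x δ : ℝ} (hx : 0 ≤ x) (hδ0 : 0 ≤ δ) (hδ1 : δ ≤ 1) :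
    δ * |x - 1| ≤ klFun x + δ ^ 2 := by
  have hδ : |δ| ≤ 1 := abs_le.2 ⟨by linarith, hδ1⟩
  rcases abs_cases (x - 1) with ⟨h, -⟩ | ⟨h, -⟩ <;> rw [h]
  · exact mul_sub_one_le_klFun_add_sq hx hδ
  · have := mul_sub_one_le_klFun_add_sq hx (s := -δ) (by rwa [abs_neg])
    linarith [neg_sq δ]

lemma mul_abs_measureReal_sub_le_toReal_klDiv_add {Ω : Type*} [MeasurableSpace Ω]
    {μ ν : Measure Ω} [IsFiniteMeasure μ] [IsFiniteMeasure ν] (hD : klDiv μ ν ≠ ∞)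
    {δ : ℝ} (hδ0 : 0 ≤ δ) (hδ1 : δ ≤ 1) (A : Set Ω) :
    δ * |ν.real A - μ.real A| ≤ (klDiv μ ν).toReal + δ ^ 2 * ν.real A := by
  obtain ⟨hac, hllr⟩ := klDiv_ne_top_iff.1 hD
  set ρ := fun x => (μ.rnDeriv ν x).toReal
  have hρ : Integrable ρ ν := Measure.integrable_toReal_rnDeriv
  have hkl : Integrable (fun x => klFun (ρ x)) ν := (integrable_klFun_rnDeriv_iff hac).2 hllr
  have hdiff : ν.real A - μ.real A = ∫ x in A, (1 - ρ x) ∂ν := by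
    rw [integral_sub (integrable_const 1) hρ.integrableOn, setIntegral_const,
      Measure.setIntegral_toReal_rnDeriv hac, smul_eq_mul, mul_one]
  calc δ * |ν.real A - μ.real A|
      ≤ ∫ x in A, δ * |ρ x - 1| ∂ν := by
        rw [hdiff, integral_const_mul]
        gcongr
        simpa only [abs_sub_comm] using abs_integral_le_integral_abs
    _ ≤ ∫ x in A, (klFun (ρ x) + δ ^ 2) ∂ν :=
        setIntegral_mono (((hρ.sub (integrable_const 1)).abs).const_mul δ).integrableOn
          (hkl.add (integrable_const _)).integrableOn
          fun x => mul_abs_sub_one_le_klFun_add_sq ENNReal.toReal_nonneg hδ0 hδ1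
    _ = ∫ x in A, klFun (ρ x) ∂ν + δ ^ 2 * ν.real A := by
        rw [integral_add hkl.integrableOn (integrable_const _), setIntegral_const, smul_eq_mul,
          mul_comm]
    _ ≤ (klDiv μ ν).toReal + δ ^ 2 * ν.real A := by
        rw [toReal_klDiv_eq_integral_klFun hac]
        exact add_le_add_left
          (setIntegral_le_integral hkl (ae_of_all _ fun _ => klFun_nonneg ENNReal.toReal_nonneg)) _

lemma tendsto_of_eventually_mul_abs_sub_le {ι : Type*} {l : Filter ι} {a : ℝ} (ha : 0 ≤ a)
    {b d : ι → ℝ} (hd : Tendsto d l (𝓝 0))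
    (h : ∀ᶠ i in l, ∀ δ ∈ Set.Icc (0 : ℝ) 1, δ * |b i - a| ≤ d i + δ ^ 2 * b i) :
    Tendsto b l (𝓝 a) := by
  rw [Metric.tendsto_nhds]
  intro ε hε
  set δ := min (1 / 2) (ε / (4 * (a + 1)))
  have hδ0 : 0 < δ := lt_min one_half_pos (by positivity)
  have hδh : δ ≤ 1 / 2 := min_le_left _ _
  have hδε : δ * (4 * (a + 1)) ≤ ε := (le_div_iff₀ (by positivity)).1 (min_le_right _ _)
  filter_upwards [h, hd.eventually (ge_mem_nhds (pow_pos hδ0 2))] with i hi hdi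
  have hδb : δ * |b i - a| ≤ δ * (δ * (1 + b i)) := by
    nlinarith [hi δ ⟨hδ0.le, by linarith⟩]
  have hclose : |b i - a| ≤ δ * (1 + b i) := le_of_mul_le_mul_left hδb hδ0
  have hbounded : b i ≤ 2 * a + 1 := by
    nlinarith [le_abs_self (b i - a), abs_nonneg (b i - a)]
  rw [Real.dist_eq]
  calc |b i - a| ≤ δ * (1 + b i) := hclose
    _ ≤ δ * (2 * (a + 1)) := by gcongr; linarith
    _ < ε := by nlinarith

/-- If `D(μ‖μₙ) → 0` then `μₙ` converges to `μ` setwise. -/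
theorem setwise_convergence_of_infoDiv_tendsto_zero
    {Ω : Type*} [MeasurableSpace Ω] (μ : Measure Ω) [IsFiniteMeasure μ]
    (μn : ℕ → Measure Ω) (hfin : ∀ n, IsFiniteMeasure (μn n))
    (h : Tendsto (fun n => infoDiv μ (μn n)) atTop (𝓝 0)) :
    ∀ A : Set Ω, MeasurableSet A → Tendsto (fun n => μn n A) atTop (𝓝 (μ A)) := by
  intro A _
  have hkl : Tendsto (fun n => klDiv μ (μn n)) atTop (𝓝 0) := by
    simpa only [infoDiv_eq_klDiv] using h
  rw [← ENNReal.tendsto_toReal_iff (fun n => measure_ne_top (μn n) A) (measure_ne_top μ A)]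
  refine tendsto_of_eventually_mul_abs_sub_le ENNReal.toReal_nonneg
    (by simpa using (ENNReal.tendsto_toReal ENNReal.zero_ne_top).comp hkl) ?_
  filter_upwards [hkl.eventually_ne ENNReal.zero_ne_top] with n hn δ hδ
  exact mul_abs_measureReal_sub_le_toReal_klDiv_add hn hδ.1 hδ.2 A
end

section
/- Let ν be a finite measure on a measurable space (Ω, 𝒜) and let μ = ν.withDensity ρ be a finite measure with D(μ‖ν) < ∞. Let (F_n) be an increasing sequence of sub-σ-algebras of 𝒜 and let f_n be a conditional density of μ given F_n with respect to ν, so that μ_n := ν.withDensity f_n satisfies D(μ_n‖ν) = ∫ (f_n ln f_n − f_n + 1) dν. If D(μ_n‖ν) → D(μ‖ν) as n → ∞, then (f_n) is a Cauchy sequence in L¹(ν) and f_n converges in L¹(ν) to ρ; in particular ∫ g dμ = ∫ g·ρ dν for every bounded measurable g. -/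
/-! Write `a = ρ` and `b = fₙ`. Since `log b` is `Fₙ`-measurable and `b` is the conditional density,
`∫ log b · (a - b) dν = 0`; with `φ x = x log x - x + 1` this is the Pythagorean identity
`D(μ‖ν) - D(μₙ‖ν) = ∫ (φ a - φ b - φ' b · (a - b)) dν`. The Bregman integrand dominates
`(√a - √b)²`, so by Cauchy–Schwarz
`‖a - b‖₁ ≤ ‖√a - √b‖₂ ‖√a + √b‖₂ ≤ (D(μ‖ν) - D(μₙ‖ν))^(1/2) (4 μ Ω)^(1/2) → 0`.
The Cauchy property follows by the triangle inequality. -/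

open MeasureTheory Filter Topology ENNReal

open InformationTheory Real

lemma sq_sqrt_sub_sqrt_le_klFun_sub {a b : ℝ} (ha : 0 ≤ a) (hb : 0 ≤ b) (hab : b = 0 → a = 0) :
    (√a - √b) ^ 2 ≤ klFun a - klFun b - log b * (a - b) := by
  rcases hb.eq_or_lt with rfl | hb
  · simp [hab rfl]
  have hsb : √b ^ 2 = b := sq_sqrt hb.le
  rcases ha.eq_or_lt with rfl | ha
  · simp only [klFun_apply, sqrt_zero]
    nlinarith
  have hsa : √a ^ 2 = a := sq_sqrt ha.le
  -- `log x ≤ x - 1` at `x = √(b / a)`, multiplied by `2 a`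
  have hlog : log (√b / √a) ≤ √b / √a - 1 := log_le_sub_one_of_pos (by positivity)
  rw [log_div (by positivity) (by positivity), log_sqrt hb.le, log_sqrt ha.le] at hlog
  have hscaled := mul_le_mul_of_nonneg_left hlog (by positivity : 0 ≤ 2 * a)
  have hdiv : 2 * a * (√b / √a - 1) = 2 * √a * √b - 2 * a := by
    field_simp
    linear_combination -√b * hsa
  simp only [klFun_apply]
  nlinarith

section Integrals

variable {Ω : Type*} [MeasurableSpace Ω] {ν : Measure Ω}

lemma integrable_log_mul_self [IsFiniteMeasure ν] {u : Ω → ℝ} (hu : Integrable u ν)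
    (hku : Integrable (fun x => klFun (u x)) ν) : Integrable (fun x => log (u x) * u x) ν := by
  have hsplit : (fun x => log (u x) * u x) = fun x => klFun (u x) + u x - 1 := by
    funext x
    rw [klFun_apply]
    ring
  rw [hsplit]
  exact (hku.add hu).sub (integrable_const 1)

lemma memLp_two_sqrt {u : Ω → ℝ} (hu : Integrable u ν) (hu0 : ∀ x, 0 ≤ u x) :
    MemLp (fun x => √(u x)) 2 ν := by
  refine (memLp_two_iff_integrable_sq (continuous_sqrt.comp_aestronglyMeasurable
    hu.aestronglyMeasurable)).2 ?_
  simpa only [sq_sqrt (hu0 _)] using hu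

lemma integral_abs_sub_le_sqrt_mul_sqrt {a b : Ω → ℝ} (ha : Integrable a ν) (hb : Integrable b ν)
    (ha0 : ∀ x, 0 ≤ a x) (hb0 : ∀ x, 0 ≤ b x) :
    ∫ x, |a x - b x| ∂ν
      ≤ √(∫ x, (√(a x) - √(b x)) ^ 2 ∂ν) * √(2 * (∫ x, a x ∂ν + ∫ x, b x ∂ν)) := by
  have hsa := memLp_two_sqrt ha ha0
  have hsb := memLp_two_sqrt hb hb0
  have hfactor : ∀ x, |√(a x) - √(b x)| * (√(a x) + √(b x)) = |a x - b x| := fun x => by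
    rw [← abs_of_nonneg (by positivity : 0 ≤ √(a x) + √(b x)), ← abs_mul]
    congr 1
    linear_combination sq_sqrt (ha0 x) - sq_sqrt (hb0 x)
  have hCS := integral_mul_le_Lp_mul_Lq_of_nonneg Real.HolderConjugate.two_two
    (ae_of_all ν fun x => abs_nonneg (√(a x) - √(b x)))
    (ae_of_all ν fun x => by positivity : 0 ≤ᵐ[ν] fun x => √(a x) + √(b x))
    (by rw [ENNReal.ofReal_ofNat]; exact (hsa.sub hsb).abs)
    (by rw [ENNReal.ofReal_ofNat]; exact hsa.add hsb)
  simp only [Real.rpow_two, ← sqrt_eq_rpow, hfactor] at hCS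
  simp only [sq_abs] at hCS
  refine hCS.trans (mul_le_mul_of_nonneg_left (sqrt_le_sqrt ?_) (sqrt_nonneg _))
  rw [← integral_add ha hb, ← integral_const_mul]
  refine integral_mono ((memLp_two_iff_integrable_sq (hsa.add hsb).1).1 (hsa.add hsb))
    ((ha.add hb).const_mul 2) fun x => ?_
  nlinarith [sq_sqrt (ha0 x), sq_sqrt (hb0 x), sq_nonneg (√(a x) - √(b x))]

end Integrals

section CondDensity

variable {Ω : Type*} {m : MeasurableSpace Ω} [mΩ : MeasurableSpace Ω] {ν : Measure Ω}
  {ρ g : Ω → ℝ≥0∞}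

def IsCondDensity (ν : Measure Ω) (m : MeasurableSpace Ω) (ρ g : Ω → ℝ≥0∞) : Prop :=
  Measurable[m] g ∧ ∀ A, MeasurableSet[m] A → ∫⁻ x in A, g x ∂ν = ∫⁻ x in A, ρ x ∂ν

namespace IsCondDensity

variable (hm : m ≤ mΩ) (hg : IsCondDensity ν m ρ g)
include hg

lemma lintegral_eq : ∫⁻ x, g x ∂ν = ∫⁻ x, ρ x ∂ν := by
  simpa using hg.2 _ MeasurableSet.univ

include hm

lemma measurable : Measurable g := hg.1.mono hm le_rfl

lemma lintegral_mul_eq (hρ : Measurable ρ) {h : Ω → ℝ≥0∞} (hh : Measurable[m] h) :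
    ∫⁻ x, h x * g x ∂ν = ∫⁻ x, h x * ρ x ∂ν := by
  have htrim : (ν.withDensity g).trim hm = (ν.withDensity ρ).trim hm := by
    refine @Measure.ext Ω m _ _ fun s hs => ?_
    rw [trim_measurableSet_eq hm hs, trim_measurableSet_eq hm hs,
      withDensity_apply _ (hm s hs), withDensity_apply _ (hm s hs), hg.2 s hs]
  simp_rw [mul_comm (h _)]
  change ∫⁻ x, (g * h) x ∂ν = ∫⁻ x, (ρ * h) x ∂ν
  rw [← lintegral_withDensity_eq_lintegral_mul ν (hg.measurable hm) (hh.mono hm le_rfl),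
    ← lintegral_withDensity_eq_lintegral_mul ν hρ (hh.mono hm le_rfl),
    ← lintegral_trim hm hh, ← lintegral_trim hm hh, htrim]

lemma ae_eq_zero_of_eq_zero (hρ : Measurable ρ) : ∀ᵐ x ∂ν, g x = 0 → ρ x = 0 := by
  have hA : MeasurableSet[m] {x | g x = 0} := hg.1 (measurableSet_singleton 0)
  have hg0 : ∫⁻ x in {x | g x = 0}, g x ∂ν = 0 :=
    (setLIntegral_eq_zero_iff (hm _ hA) (hg.measurable hm)).2 (ae_of_all _ fun _ hx => hx)
  exact (setLIntegral_eq_zero_iff (hm _ hA) hρ).1 (hg.2 _ hA ▸ hg0)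

variable (hρfin : ∫⁻ x, ρ x ∂ν ≠ ∞)
include hρfin

lemma ae_ne_top : ∀ᵐ x ∂ν, g x ≠ ∞ :=
  (ae_lt_top (hg.measurable hm) (hg.lintegral_eq ▸ hρfin)).mono fun _ => ne_of_lt

lemma integrable_toReal : Integrable (fun x => (g x).toReal) ν :=
  integrable_toReal_of_lintegral_ne_top (hg.measurable hm).aemeasurable (hg.lintegral_eq ▸ hρfin)

variable (hρ : Measurable ρ)
include hρ

lemma lintegral_ofReal_mul_toReal_eq {h : Ω → ℝ} (hh : Measurable[m] h) {ψ : ℝ → ℝ}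
    (hψ : Measurable ψ) (hψ_hom : ∀ r t, 0 ≤ t → ψ (r * t) = ψ r * t) :
    ∫⁻ x, ENNReal.ofReal (ψ (h x * (ρ x).toReal)) ∂ν
      = ∫⁻ x, ENNReal.ofReal (ψ (h x * (g x).toReal)) ∂ν := by
  have hsplit : ∀ u : Ω → ℝ≥0∞, (∀ᵐ x ∂ν, u x ≠ ∞) →
      ∫⁻ x, ENNReal.ofReal (ψ (h x * (u x).toReal)) ∂ν
        = ∫⁻ x, ENNReal.ofReal (ψ (h x)) * u x ∂ν := by
    refine fun u hu => lintegral_congr_ae <| hu.mono fun x hx => ?_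
    dsimp only
    rw [hψ_hom _ _ toReal_nonneg, ENNReal.ofReal_mul' toReal_nonneg, ofReal_toReal hx]
  rw [hsplit ρ ((ae_lt_top hρ hρfin).mono fun _ => ne_of_lt), hsplit g (hg.ae_ne_top hm hρfin),
    hg.lintegral_mul_eq hm hρ (h := fun x => ENNReal.ofReal (ψ (h x))) (hψ.comp hh).ennreal_ofReal]

lemma integrable_mul {h : Ω → ℝ} (hh : Measurable[m] h)
    (hint : Integrable (fun x => h x * (g x).toReal) ν) :
    Integrable (fun x => h x * (ρ x).toReal) ν := by
  refine ⟨((hh.mono hm le_rfl).mul hρ.ennreal_toReal).aestronglyMeasurable, ?_⟩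
  have hfin := hint.2
  simp only [HasFiniteIntegral, enorm_eq_ofReal_abs] at hfin ⊢
  rwa [hg.lintegral_ofReal_mul_toReal_eq hm hρfin hρ hh continuous_abs.measurable
    fun r t ht => by rw [abs_mul, abs_of_nonneg ht]]

lemma integral_mul_eq {h : Ω → ℝ} (hh : Measurable[m] h)
    (hint : Integrable (fun x => h x * (g x).toReal) ν) :
    ∫ x, h x * (ρ x).toReal ∂ν = ∫ x, h x * (g x).toReal ∂ν := by
  rw [integral_eq_lintegral_pos_part_sub_lintegral_neg_part (hg.integrable_mul hm hρfin hρ hh hint),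
    integral_eq_lintegral_pos_part_sub_lintegral_neg_part hint]
  congr 2
  · exact hg.lintegral_ofReal_mul_toReal_eq hm hρfin hρ hh (ψ := id) measurable_id fun _ _ _ => rfl
  · exact hg.lintegral_ofReal_mul_toReal_eq hm hρfin hρ hh (ψ := Neg.neg) measurable_neg
      fun _ _ _ => (neg_mul _ _).symm

lemma integral_toReal_eq : ∫ x, (g x).toReal ∂ν = ∫ x, (ρ x).toReal ∂ν := by
  simpa using (hg.integral_mul_eq hm hρfin hρ (h := fun _ => 1) measurable_const
    (by simpa using hg.integrable_toReal hm hρfin)).symm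

variable [IsFiniteMeasure ν] (hkg : Integrable (fun x => klFun (g x).toReal) ν)
include hkg

lemma integrable_log_mul_sub :
    Integrable (fun x => log (g x).toReal * ((ρ x).toReal - (g x).toReal)) ν := by
  have hlog : Measurable[m] fun x => log (g x).toReal := measurable_log.comp hg.1.ennreal_toReal
  have hself := integrable_log_mul_self (hg.integrable_toReal hm hρfin) hkg
  simp_rw [mul_sub]
  exact (hg.integrable_mul hm hρfin hρ hlog hself).sub hself

lemma integral_log_mul_sub_eq_zero :
    ∫ x, log (g x).toReal * ((ρ x).toReal - (g x).toReal) ∂ν = 0 := by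
  have hlog : Measurable[m] fun x => log (g x).toReal := measurable_log.comp hg.1.ennreal_toReal
  have hself := integrable_log_mul_self (hg.integrable_toReal hm hρfin) hkg
  simp_rw [mul_sub]
  rw [integral_sub (hg.integrable_mul hm hρfin hρ hlog hself) hself,
    hg.integral_mul_eq hm hρfin hρ hlog hself, sub_self]

variable (hkρ : Integrable (fun x => klFun (ρ x).toReal) ν)
include hkρ

lemma integral_sq_sqrt_sub_sqrt_le :
    ∫ x, (√(ρ x).toReal - √(g x).toReal) ^ 2 ∂ν
      ≤ ∫ x, klFun (ρ x).toReal ∂ν - ∫ x, klFun (g x).toReal ∂ν := by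
  have hsq : Integrable (fun x => (√(ρ x).toReal - √(g x).toReal) ^ 2) ν := by
    have hsqrt := (memLp_two_sqrt (integrable_toReal_of_lintegral_ne_top hρ.aemeasurable hρfin)
      fun _ => toReal_nonneg).sub
        (memLp_two_sqrt (hg.integrable_toReal hm hρfin) fun _ => toReal_nonneg)
    exact (memLp_two_iff_integrable_sq hsqrt.1).1 hsqrt
  have hcross := hg.integrable_log_mul_sub hm hρfin hρ hkg
  calc ∫ x, (√(ρ x).toReal - √(g x).toReal) ^ 2 ∂ν
      ≤ ∫ x, (klFun (ρ x).toReal - klFun (g x).toReal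
          - log (g x).toReal * ((ρ x).toReal - (g x).toReal)) ∂ν := by
        refine integral_mono_ae hsq ((hkρ.sub hkg).sub hcross) ?_
        filter_upwards [hg.ae_ne_top hm hρfin, hg.ae_eq_zero_of_eq_zero hm hρ] with x hgx hzero
        refine sq_sqrt_sub_sqrt_le_klFun_sub toReal_nonneg toReal_nonneg fun hb => ?_
        rw [hzero ((toReal_eq_zero_iff _).1 hb |>.resolve_right hgx), toReal_zero]
    _ = ∫ x, klFun (ρ x).toReal ∂ν - ∫ x, klFun (g x).toReal ∂ν := by
        have hdiff : Integrable (fun x => klFun (ρ x).toReal - klFun (g x).toReal) ν := hkρ.sub hkg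
        rw [integral_sub hdiff hcross, hg.integral_log_mul_sub_eq_zero hm hρfin hρ hkg,
          integral_sub hkρ hkg, sub_zero]

lemma integral_abs_sub_le :
    ∫ x, |(ρ x).toReal - (g x).toReal| ∂ν
      ≤ √(∫ x, klFun (ρ x).toReal ∂ν - ∫ x, klFun (g x).toReal ∂ν)
        * √(4 * ∫ x, (ρ x).toReal ∂ν) := by
  calc ∫ x, |(ρ x).toReal - (g x).toReal| ∂ν
      ≤ √(∫ x, (√(ρ x).toReal - √(g x).toReal) ^ 2 ∂ν)
        * √(2 * (∫ x, (ρ x).toReal ∂ν + ∫ x, (g x).toReal ∂ν)) :=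
        integral_abs_sub_le_sqrt_mul_sqrt
          (integrable_toReal_of_lintegral_ne_top hρ.aemeasurable hρfin)
          (hg.integrable_toReal hm hρfin) (fun _ => toReal_nonneg) fun _ => toReal_nonneg
    _ ≤ _ := by
        rw [hg.integral_toReal_eq hm hρfin hρ, ← two_mul, ← mul_assoc]
        gcongr
        · exact hg.integral_sq_sqrt_sub_sqrt_le hm hρfin hρ hkg hkρ
        · norm_num

end IsCondDensity
end CondDensity

section Divergence

variable {Ω : Type*} [MeasurableSpace Ω] {ν : Measure Ω} {ρ : Ω → ℝ≥0∞}

lemma infoDiv_withDensity [SigmaFinite ν] (hρ : Measurable ρ) :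
    infoDiv (ν.withDensity ρ) ν = ∫⁻ x, ENNReal.ofReal (klFun (ρ x).toReal) ∂ν := by
  rw [infoDiv, if_pos (withDensity_absolutelyContinuous ν ρ)]
  refine lintegral_congr_ae ?_
  filter_upwards [Measure.rnDeriv_withDensity ν hρ] with x hx
  rw [hx, klFun_apply]
  ring_nf

lemma toReal_infoDiv_withDensity [SigmaFinite ν] (hρ : Measurable ρ) :
    (infoDiv (ν.withDensity ρ) ν).toReal = ∫ x, klFun (ρ x).toReal ∂ν := by
  rw [infoDiv_withDensity hρ, integral_eq_lintegral_of_nonneg_ae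
    (ae_of_all _ fun _ => klFun_nonneg toReal_nonneg)
    (measurable_klFun.comp hρ.ennreal_toReal).aestronglyMeasurable]

lemma integrable_klFun_of_infoDiv_withDensity_lt_top [SigmaFinite ν] (hρ : Measurable ρ)
    (h : infoDiv (ν.withDensity ρ) ν < ∞) : Integrable (fun x => klFun (ρ x).toReal) ν :=
  ⟨(measurable_klFun.comp hρ.ennreal_toReal).aestronglyMeasurable,
    (hasFiniteIntegral_iff_ofReal (ae_of_all _ fun _ => klFun_nonneg toReal_nonneg)).2
      (by rwa [infoDiv_withDensity hρ] at h)⟩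

lemma tendsto_integral_abs_sub_of_tendsto_infoDiv [IsFiniteMeasure ν] {m : ℕ → MeasurableSpace Ω}
    (hm : ∀ n, m n ≤ ‹MeasurableSpace Ω›) {g : ℕ → Ω → ℝ≥0∞}
    (hg : ∀ n, IsCondDensity ν (m n) ρ (g n)) (hρfin : ∫⁻ x, ρ x ∂ν ≠ ∞) (hρ : Measurable ρ)
    (hfin : infoDiv (ν.withDensity ρ) ν < ∞)
    (hconv : Tendsto (fun n => infoDiv (ν.withDensity (g n)) ν) atTop
      (𝓝 (infoDiv (ν.withDensity ρ) ν))) :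
    Tendsto (fun n => ∫ x, |(ρ x).toReal - (g n x).toReal| ∂ν) atTop (𝓝 0) := by
  have hgm : ∀ n, Measurable (g n) := fun n => (hg n).measurable (hm n)
  have hdefect : Tendsto (fun n => ∫ x, klFun (ρ x).toReal ∂ν - ∫ x, klFun (g n x).toReal ∂ν)
      atTop (𝓝 0) := by
    have hlim := (ENNReal.tendsto_toReal hfin.ne).comp hconv
    simp only [Function.comp_def, toReal_infoDiv_withDensity (hgm _),
      toReal_infoDiv_withDensity hρ] at hlim
    simpa using (tendsto_const_nhds (x := ∫ x, klFun (ρ x).toReal ∂ν)).sub hlim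
  have hbound := (hdefect.sqrt.mul_const √(4 * ∫ x, (ρ x).toReal ∂ν))
  rw [sqrt_zero, zero_mul] at hbound
  refine tendsto_of_tendsto_of_tendsto_of_le_of_le' tendsto_const_nhds hbound
    (Eventually.of_forall fun n => integral_nonneg fun _ => abs_nonneg _) ?_
  filter_upwards [hconv.eventually (gt_mem_nhds hfin)] with n hn
  exact (hg n).integral_abs_sub_le (hm n) hρfin hρ
    (integrable_klFun_of_infoDiv_withDensity_lt_top (hgm n) hn)
    (integrable_klFun_of_infoDiv_withDensity_lt_top hρ hfin)

end Divergence

section L1Distance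

variable {Ω : Type*} [MeasurableSpace Ω] {ν : Measure Ω}

lemma tsub_add_tsub_eq_ofReal_abs_sub {u v : ℝ≥0∞} (hu : u ≠ ∞) (hv : v ≠ ∞) :
    (u - v) + (v - u) = ENNReal.ofReal |v.toReal - u.toReal| := by
  rcases le_total u v with h | h
  · rw [tsub_eq_zero_of_le h, zero_add, abs_of_nonneg (sub_nonneg.2 (toReal_mono hv h)),
      ← toReal_sub_of_le h hv, ofReal_toReal (sub_ne_top hv)]
  · rw [tsub_eq_zero_of_le h, add_zero, abs_of_nonpos (sub_nonpos.2 (toReal_mono hu h)), neg_sub,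
      ← toReal_sub_of_le h hu, ofReal_toReal (sub_ne_top hu)]

lemma lintegral_tsub_add_tsub_eq_ofReal_integral {u v : Ω → ℝ≥0∞} (hu : Measurable u)
    (hv : Measurable v) (hu_fin : ∫⁻ x, u x ∂ν ≠ ∞) (hv_fin : ∫⁻ x, v x ∂ν ≠ ∞) :
    ∫⁻ x, (u x - v x) + (v x - u x) ∂ν
      = ENNReal.ofReal (∫ x, |(v x).toReal - (u x).toReal| ∂ν) := by
  have hint : Integrable (fun x => |(v x).toReal - (u x).toReal|) ν :=
    ((integrable_toReal_of_lintegral_ne_top hv.aemeasurable hv_fin).sub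
      (integrable_toReal_of_lintegral_ne_top hu.aemeasurable hu_fin)).abs
  rw [ofReal_integral_eq_lintegral_ofReal hint (ae_of_all _ fun _ => abs_nonneg _)]
  refine lintegral_congr_ae ?_
  filter_upwards [ae_lt_top hu hu_fin, ae_lt_top hv hv_fin] with x hux hvx
  exact tsub_add_tsub_eq_ofReal_abs_sub hux.ne hvx.ne

lemma lintegral_tsub_add_tsub_le {u v w : Ω → ℝ≥0∞} (hu : Measurable u) (hv : Measurable v) :
    ∫⁻ x, (u x - w x) + (w x - u x) ∂ν
      ≤ ∫⁻ x, (u x - v x) + (v x - u x) ∂ν + ∫⁻ x, (w x - v x) + (v x - w x) ∂ν := by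
  rw [← lintegral_add_left (f := fun x => (u x - v x) + (v x - u x)) ((hu.sub hv).add (hv.sub hu))]
  refine lintegral_mono fun x => ?_
  calc (u x - w x) + (w x - u x)
      ≤ ((u x - v x) + (v x - w x)) + ((w x - v x) + (v x - u x)) :=
        add_le_add tsub_le_tsub_add_tsub tsub_le_tsub_add_tsub
    _ = _ := by ring

lemma cauchy_of_tendsto_lintegral_tsub_add_tsub {f : ℕ → Ω → ℝ≥0∞} {ρ : Ω → ℝ≥0∞}
    (hf : ∀ n, Measurable (f n)) (hρ : Measurable ρ)
    (h : Tendsto (fun n => ∫⁻ x, (f n x - ρ x) + (ρ x - f n x) ∂ν) atTop (𝓝 0)) :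
    ∀ ε : ℝ≥0∞, 0 < ε → ∃ N : ℕ, ∀ p ≥ N, ∀ q ≥ N,
      ∫⁻ x, (f p x - f q x) + (f q x - f p x) ∂ν < ε := by
  intro ε hε
  obtain ⟨N, hN⟩ := eventually_atTop.1 (h.eventually_lt_const (ENNReal.half_pos hε.ne'))
  refine ⟨N, fun p hp q hq => ?_⟩
  calc ∫⁻ x, (f p x - f q x) + (f q x - f p x) ∂ν
      ≤ ∫⁻ x, (f p x - ρ x) + (ρ x - f p x) ∂ν + ∫⁻ x, (f q x - ρ x) + (ρ x - f q x) ∂ν :=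
        lintegral_tsub_add_tsub_le (hf p) hρ
    _ < ε / 2 + ε / 2 := ENNReal.add_lt_add (hN p hp) (hN q hq)
    _ = ε := ENNReal.add_halves ε

end L1Distance

theorem conditional_densities_cauchy_and_L1_convergence_general
    {Ω : Type*} [mΩ : MeasurableSpace Ω] (ν : Measure Ω) [IsFiniteMeasure ν]
    (ρ : Ω → ℝ≥0∞) (hρ : Measurable ρ)
    (μ : Measure Ω) (hμ : μ = ν.withDensity ρ) [IsFiniteMeasure μ]
    (hfin : infoDiv μ ν < ∞)
    (F : ℕ → MeasurableSpace Ω) (hFle : ∀ n, F n ≤ mΩ)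
    (f : ℕ → Ω → ℝ≥0∞) (hfmeas : ∀ n, Measurable[F n] (f n))
    (hf : ∀ n, ∀ A : Set Ω, MeasurableSet[F n] A → ∫⁻ x in A, f n x ∂ν = μ A)
    (hconv : Tendsto (fun n => @infoDiv Ω mΩ (ν.withDensity (f n)) ν) atTop
      (𝓝 (@infoDiv Ω mΩ μ ν))) :
    (∀ ε : ℝ≥0∞, 0 < ε → ∃ N : ℕ, ∀ p ≥ N, ∀ q ≥ N,
        ∫⁻ x, ((f p x - f q x) + (f q x - f p x)) ∂ν < ε) ∧
    Tendsto (fun n => ∫⁻ x, ((f n x - ρ x) + (ρ x - f n x)) ∂ν) atTop (𝓝 0) ∧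
    (∀ g : Ω → ℝ, Measurable g → (∃ C : ℝ, ∀ x, |g x| ≤ C) →
        ∫ x, g x ∂μ = ∫ x, g x * (ρ x).toReal ∂ν) := by
  subst hμ
  have hρfin : ∫⁻ x, ρ x ∂ν ≠ ∞ := by simpa using measure_ne_top (ν.withDensity ρ) Set.univ
  have hcond : ∀ n, IsCondDensity ν (F n) ρ (f n) := fun n =>
    ⟨hfmeas n, fun A hA => by rw [hf n A hA, withDensity_apply ρ (hFle n A hA)]⟩
  have hfm : ∀ n, Measurable (f n) := fun n => (hcond n).measurable (hFle n)
  have hL1 : Tendsto (fun n => ∫⁻ x, ((f n x - ρ x) + (ρ x - f n x)) ∂ν) atTop (𝓝 0) := by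
    have h := ENNReal.tendsto_ofReal
      (tendsto_integral_abs_sub_of_tendsto_infoDiv hFle hcond hρfin hρ hfin hconv)
    rw [ENNReal.ofReal_zero] at h
    exact h.congr fun n => (lintegral_tsub_add_tsub_eq_ofReal_integral (hfm n) hρ
      ((hcond n).lintegral_eq ▸ hρfin) hρfin).symm
  refine ⟨cauchy_of_tendsto_lintegral_tsub_add_tsub hfm hρ hL1, hL1, fun g _ _ => ?_⟩
  rw [integral_withDensity_eq_integral_toReal_smul hρ (ae_lt_top hρ hρfin)]
  simp_rw [smul_eq_mul, mul_comm]

/-- If `fₙ` are conditional densities of `μ = ν.withDensity ρ` given an increasing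
sequence of sub-σ-algebras `Fₙ` and `D(ν.withDensity fₙ‖ν) → D(μ‖ν) < ∞`, then `fₙ`
is Cauchy in `L¹(ν)`, converges in `L¹(ν)` to `ρ`, and in particular
`∫ g dμ = ∫ g·ρ dν` for every bounded measurable `g`.
(The `L¹` distance of `ℝ≥0∞`-valued functions `f, g` is `∫⁻ ((f - g) + (g - f)) dν`
with truncated subtraction.) -/
theorem conditional_densities_cauchy_and_L1_convergence
    {Ω : Type*} [mΩ : MeasurableSpace Ω] (ν : Measure Ω) [IsFiniteMeasure ν]
    (ρ : Ω → ℝ≥0∞) (hρ : Measurable ρ)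
    (μ : Measure Ω) (hμ : μ = ν.withDensity ρ) [IsFiniteMeasure μ]
    (hfin : infoDiv μ ν < ∞)
    (F : ℕ → MeasurableSpace Ω) (hFmono : Monotone F) (hFle : ∀ n, F n ≤ mΩ)
    (f : ℕ → Ω → ℝ≥0∞) (hfmeas : ∀ n, Measurable[F n] (f n))
    (hf : ∀ n, ∀ A : Set Ω, MeasurableSet[F n] A → ∫⁻ x in A, f n x ∂ν = μ A)
    (hconv : Tendsto (fun n => @infoDiv Ω mΩ (ν.withDensity (f n)) ν) atTop
      (𝓝 (@infoDiv Ω mΩ μ ν))) :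
    (∀ ε : ℝ≥0∞, 0 < ε → ∃ N : ℕ, ∀ p ≥ N, ∀ q ≥ N,
        ∫⁻ x, ((f p x - f q x) + (f q x - f p x)) ∂ν < ε) ∧
    Tendsto (fun n => ∫⁻ x, ((f n x - ρ x) + (ρ x - f n x)) ∂ν) atTop (𝓝 0) ∧
    (∀ g : Ω → ℝ, Measurable g → (∃ C : ℝ, ∀ x, |g x| ≤ C) →
        ∫ x, g x ∂μ = ∫ x, g x * (ρ x).toReal ∂ν) :=
  conditional_densities_cauchy_and_L1_convergence_general (mΩ := mΩ) ν ρ hρ μ hμ hfin F hFle f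
    hfmeas hf hconv
end
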